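/- arXiv:1611.04031 — 2 statements merged into one kernel-verified Lean document; each statement's English description precedes it below -/
import Mathlib

section
/- Let F be the finite field with 2^n elements. For every u, c ∈ F, the map χ_{u,c}(x,y) = (−1)^{Tr(ux) + Tr(c²y) + σ(c,x)} · i^{Tr(cx)} is multiplicative for the group operation (x₁,y₁) ⋆ (x₂,y₂) = (x₁+x₂, y₁+y₂+x₁x₂) on F × F; that is, χ_{u,c}((x₁,y₁)⋆(x₂,y₂)) = χ_{u,c}(x₁,y₁) · χ_{u,c}(x₂,y₂) for all x₁,x₂,y₁,y₂ ∈ F. -/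
open Finset

noncomputable section

noncomputable instance (n : ℕ) : Fintype (GaloisField 2 n) := Fintype.ofFinite _

/-- The absolute trace `Tr : F → F_2` for `F = GaloisField 2 n`. -/
def Tr (n : ℕ) (z : GaloisField 2 n) : ZMod 2 :=
  Algebra.trace (ZMod 2) (GaloisField 2 n) z

/-- `σ(c,x) = Σ_{0 ≤ i < j ≤ n−1} (cx)^{2^i} (cx)^{2^j} ∈ F`. -/
def sigma (n : ℕ) (c x : GaloisField 2 n) : GaloisField 2 n :=
  ∑ p ∈ (Finset.range n ×ˢ Finset.range n).filter (fun p => p.1 < p.2),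
    (c * x) ^ (2 ^ p.1) * (c * x) ^ (2 ^ p.2)

/-- Lift of an element of `{0,1} ⊆ F` to the integer `0` or `1`. -/
def lift01 {n : ℕ} (a : GaloisField 2 n) : ℕ :=
  letI := Classical.decEq (GaloisField 2 n)
  if a = 1 then 1 else 0

/-- The character `χ_{u,c}(x,y) = (−1)^{Tr(ux) + Tr(c²y) + σ(c,x)} · i^{Tr(cx)}`. -/
def chi (n : ℕ) (u c : GaloisField 2 n) (x y : GaloisField 2 n) : ℂ :=
  (-1 : ℂ) ^ ((Tr n (u * x)).val + (Tr n (c ^ 2 * y)).val + lift01 (sigma n c x)) *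
    Complex.I ^ (Tr n (c * x)).val

/-! `σ(c, x)` is the second elementary symmetric function `e₂` of the Frobenius orbit
`a, a², …, a^{2^{n-1}}` of `a = c x`, whose first one `e₁` is the trace. In characteristic 2,
induction on the orbit length gives `e₂(a + b) = e₂(a) + e₂(b) + e₁(a) e₁(b) + e₁(a b)`, and
`e₂(a)² = e₂(a) + (e₁(a) - a) (a^{2^n} - a) = e₂(a)`, so `σ` is a bit. Hence, in `F₂`,
`σ(c, x₁ + x₂) = σ(c, x₁) + σ(c, x₂) + Tr(c x₁) Tr(c x₂) + Tr(c² x₁ x₂)`: the last term cancels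
the one coming from `y₁ + y₂ + x₁ x₂`, and the cross term is the sign in
`i^{s ⊕ t} = i^s i^t (-1)^{s t}` for bits `s, t`. -/

open Polynomial Module

section FrobeniusSums

variable {R : Type*} [CommRing R]

def frobeniusSum (d : ℕ) (a : R) : R := ∑ i ∈ range d, a ^ 2 ^ i

/-- The second elementary symmetric function of `a, a ^ 2, …, a ^ 2 ^ (d - 1)`. -/
def frobeniusPairSum (d : ℕ) (a : R) : R := ∑ j ∈ range d, frobeniusSum j a * a ^ 2 ^ j

theorem frobeniusSum_succ (d : ℕ) (a : R) :
    frobeniusSum (d + 1) a = frobeniusSum d a + a ^ 2 ^ d :=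
  sum_range_succ _ _

theorem frobeniusPairSum_succ (d : ℕ) (a : R) :
    frobeniusPairSum (d + 1) a = frobeniusPairSum d a + frobeniusSum d a * a ^ 2 ^ d :=
  sum_range_succ _ _

theorem frobeniusSum_sq_add_self (d : ℕ) (a : R) :
    frobeniusSum d (a ^ 2) + a = frobeniusSum (d + 1) a := by
  simp only [frobeniusSum, sum_range_succ' _ d, ← pow_mul, ← pow_succ', pow_zero, pow_one]

theorem frobeniusPairSum_sq (d : ℕ) (a : R) :
    frobeniusPairSum d (a ^ 2) =
      frobeniusPairSum d a + (frobeniusSum d a - a) * (a ^ 2 ^ d - a) := by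
  induction d with
  | zero => simp [frobeniusPairSum, frobeniusSum]
  | succ d ih =>
    have hsq := frobeniusSum_sq_add_self d a
    rw [frobeniusSum_succ] at hsq
    have hpow : (a ^ 2) ^ 2 ^ d = a ^ 2 ^ (d + 1) := by rw [← pow_mul, ← pow_succ']
    rw [frobeniusPairSum_succ, frobeniusPairSum_succ, ih, frobeniusSum_succ, hpow]
    linear_combination a ^ 2 ^ (d + 1) * hsq

variable [CharP R 2]

theorem frobeniusSum_add (d : ℕ) (a b : R) :
    frobeniusSum d (a + b) = frobeniusSum d a + frobeniusSum d b := by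
  simp only [frobeniusSum, add_pow_char_pow, sum_add_distrib]

theorem sq_frobeniusSum (d : ℕ) (a : R) : frobeniusSum d a ^ 2 = frobeniusSum d (a ^ 2) := by
  simp only [frobeniusSum, CharTwo.sum_sq, ← pow_mul, mul_comm]

theorem sq_frobeniusPairSum (d : ℕ) (a : R) :
    frobeniusPairSum d a ^ 2 = frobeniusPairSum d (a ^ 2) := by
  simp only [frobeniusPairSum, CharTwo.sum_sq, mul_pow, sq_frobeniusSum, ← pow_mul, mul_comm]

theorem frobeniusPairSum_add (d : ℕ) (a b : R) :
    frobeniusPairSum d (a + b) = frobeniusPairSum d a + frobeniusPairSum d b +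
      frobeniusSum d a * frobeniusSum d b + frobeniusSum d (a * b) := by
  induction d with
  | zero => simp [frobeniusPairSum, frobeniusSum]
  | succ d ih =>
    simp only [frobeniusPairSum_succ, frobeniusSum_succ, ih, frobeniusSum_add, add_pow_char_pow,
      mul_pow]
    linear_combination -(a ^ 2 ^ d * b ^ 2 ^ d) * (CharTwo.two_eq_zero (R := R))

theorem isIdempotentElem_frobeniusPairSum {d : ℕ} {a : R} (ha : a ^ 2 ^ d = a) :
    IsIdempotentElem (frobeniusPairSum d a) := by
  rw [IsIdempotentElem, ← sq, sq_frobeniusPairSum, frobeniusPairSum_sq, ha, sub_self,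
    mul_zero, add_zero]

end FrobeniusSums

section FiniteField

variable {L : Type*} [Field L] [Finite L] [Algebra (ZMod 2) L]

theorem algebraMap_trace_eq_frobeniusSum (x : L) :
    algebraMap (ZMod 2) L (Algebra.trace (ZMod 2) L x) =
      frobeniusSum (finrank (ZMod 2) L) x := by
  rw [FiniteField.algebraMap_trace_eq_sum_pow, Nat.card_zmod, frobeniusSum]

theorem pow_two_pow_finrank (x : L) : x ^ 2 ^ finrank (ZMod 2) L = x := by
  have := Fintype.ofFinite L
  have hcard : Fintype.card L = 2 ^ finrank (ZMod 2) L := by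
    rw [Fintype.card_eq_nat_card, Module.natCard_eq_pow_finrank (K := ZMod 2), Nat.card_zmod]
  rw [← hcard, FiniteField.pow_card]

theorem frobeniusPairSum_mem_range_algebraMap (x : L) :
    frobeniusPairSum (finrank (ZMod 2) L) x ∈ Set.range (algebraMap (ZMod 2) L) := by
  have := charP_of_injective_algebraMap' (ZMod 2) (A := L) 2
  rcases IsIdempotentElem.iff_eq_zero_or_one.mp
    (isIdempotentElem_frobeniusPairSum (pow_two_pow_finrank x)) with h | h
  · exact ⟨0, by rw [h, map_zero]⟩
  · exact ⟨1, by rw [h, map_one]⟩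

theorem frobeniusPairSum_add_eq_algebraMap (x y : L) :
    frobeniusPairSum (finrank (ZMod 2) L) (x + y) =
      frobeniusPairSum (finrank (ZMod 2) L) x + frobeniusPairSum (finrank (ZMod 2) L) y +
        algebraMap (ZMod 2) L (Algebra.trace (ZMod 2) L x * Algebra.trace (ZMod 2) L y +
          Algebra.trace (ZMod 2) L (x * y)) := by
  have := charP_of_injective_algebraMap' (ZMod 2) (A := L) 2
  rw [frobeniusPairSum_add, map_add, map_mul, algebraMap_trace_eq_frobeniusSum,
    algebraMap_trace_eq_frobeniusSum, algebraMap_trace_eq_frobeniusSum, add_assoc _ (_ * _)]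

end FiniteField

theorem finrank_galoisField_zero (p : ℕ) [Fact p.Prime] :
    finrank (ZMod p) (GaloisField p 0) = 1 := by
  have hpoly : (X ^ p ^ 0 - X : (ZMod p)[X]) = C 0 := by simp
  have : IsSplittingField (ZMod p) (ZMod p) (X ^ p ^ 0 - X) := hpoly ▸ isSplittingField_C 0
  have e : ZMod p ≃ₐ[ZMod p] GaloisField p 0 := IsSplittingField.algEquiv (ZMod p) _
  rw [← e.toLinearEquiv.finrank_eq, finrank_self]

theorem sigma_eq_frobeniusPairSum_self (n : ℕ) (c x : GaloisField 2 n) :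
    sigma n c x = frobeniusPairSum n (c * x) := by
  rw [sigma, sum_filter, sum_product_right, frobeniusPairSum]
  refine sum_congr rfl fun j hj => ?_
  rw [frobeniusSum, sum_mul, ← sum_filter]
  congr 1
  ext i
  simp only [mem_filter, mem_range] at hj ⊢
  omega

/-- `GaloisField 2 0` is `ZMod 2`, of degree `1`, while `sigma 0` is an empty sum; this is
harmless because `frobeniusPairSum 1` vanishes too. -/
theorem sigma_eq_frobeniusPairSum (n : ℕ) (c x : GaloisField 2 n) :
    sigma n c x = frobeniusPairSum (finrank (ZMod 2) (GaloisField 2 n)) (c * x) := by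
  rw [sigma_eq_frobeniusPairSum_self]
  rcases eq_or_ne n 0 with rfl | hn
  · rw [finrank_galoisField_zero]
    simp [frobeniusPairSum, frobeniusSum]
  · rw [GaloisField.finrank 2 hn]

theorem zmodTwo_eq_zero_or_eq_one (a : ZMod 2) : a = 0 ∨ a = 1 := by
  decide +revert

section GaloisField

variable {n : ℕ}

theorem Tr_add (z w : GaloisField 2 n) : Tr n (z + w) = Tr n z + Tr n w :=
  map_add (Algebra.trace (ZMod 2) (GaloisField 2 n)) z w

theorem exists_algebraMap_eq_sigma (c x : GaloisField 2 n) :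
    ∃ s : ZMod 2, algebraMap (ZMod 2) (GaloisField 2 n) s = sigma n c x := by
  rw [sigma_eq_frobeniusPairSum]
  exact frobeniusPairSum_mem_range_algebraMap (c * x)

theorem sigma_add (c x₁ x₂ : GaloisField 2 n) :
    sigma n c (x₁ + x₂) = sigma n c x₁ + sigma n c x₂ +
      algebraMap (ZMod 2) (GaloisField 2 n)
        (Tr n (c * x₁) * Tr n (c * x₂) + Tr n (c ^ 2 * (x₁ * x₂))) := by
  rw [sigma_eq_frobeniusPairSum, sigma_eq_frobeniusPairSum, sigma_eq_frobeniusPairSum, mul_add,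
    frobeniusPairSum_add_eq_algebraMap, Tr, Tr, Tr, mul_mul_mul_comm, ← sq]

theorem lift01_algebraMap (s : ZMod 2) :
    lift01 (algebraMap (ZMod 2) (GaloisField 2 n) s) = s.val := by
  rcases zmodTwo_eq_zero_or_eq_one s with rfl | rfl <;> simp [lift01, ZMod.val_one]

end GaloisField

theorem neg_one_pow_val_add {M : Type*} [Monoid M] [HasDistribNeg M] (a b : ZMod 2) :
    (-1 : M) ^ (a + b).val = (-1) ^ a.val * (-1) ^ b.val := by
  rcases zmodTwo_eq_zero_or_eq_one a with rfl | rfl <;>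
    rcases zmodTwo_eq_zero_or_eq_one b with rfl | rfl <;>
    simp [CharTwo.add_self_eq_zero, ZMod.val_one]

theorem I_pow_val_add (a b : ZMod 2) :
    Complex.I ^ (a + b).val = Complex.I ^ a.val * Complex.I ^ b.val * (-1) ^ (a * b).val := by
  rcases zmodTwo_eq_zero_or_eq_one a with rfl | rfl <;>
    rcases zmodTwo_eq_zero_or_eq_one b with rfl | rfl <;>
    simp [CharTwo.add_self_eq_zero, ZMod.val_one]

theorem neg_one_pow_mul_I_pow_val_add {E E₁ E₂ T₁ T₂ : ZMod 2}
    (h : E + T₁ * T₂ = E₁ + E₂) :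
    (-1 : ℂ) ^ E.val * Complex.I ^ (T₁ + T₂).val =
      (-1) ^ E₁.val * Complex.I ^ T₁.val * ((-1) ^ E₂.val * Complex.I ^ T₂.val) :=
  calc (-1 : ℂ) ^ E.val * Complex.I ^ (T₁ + T₂).val
      = (-1) ^ (E + T₁ * T₂).val * (Complex.I ^ T₁.val * Complex.I ^ T₂.val) := by
        rw [I_pow_val_add, neg_one_pow_val_add]; ring
    _ = _ := by rw [h, neg_one_pow_val_add]; ring

theorem chi_eq_of_algebraMap_eq_sigma {n : ℕ} (u c x y : GaloisField 2 n) {s : ZMod 2}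
    (hs : algebraMap (ZMod 2) (GaloisField 2 n) s = sigma n c x) :
    chi n u c x y =
      (-1) ^ (Tr n (u * x) + Tr n (c ^ 2 * y) + s).val * Complex.I ^ (Tr n (c * x)).val := by
  rw [chi, ← hs, lift01_algebraMap, neg_one_pow_val_add, neg_one_pow_val_add, pow_add, pow_add]

/-- `χ_{u,c}` is multiplicative for the group operation
`(x₁,y₁) ⋆ (x₂,y₂) = (x₁+x₂, y₁+y₂+x₁x₂)` on `F × F`. -/
theorem chi_multiplicative (n : ℕ) (u c : GaloisField 2 n)
    (x₁ x₂ y₁ y₂ : GaloisField 2 n) :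
    chi n u c (x₁ + x₂) (y₁ + y₂ + x₁ * x₂) = chi n u c x₁ y₁ * chi n u c x₂ y₂ := by
  obtain ⟨s₁, hs₁⟩ := exists_algebraMap_eq_sigma c x₁
  obtain ⟨s₂, hs₂⟩ := exists_algebraMap_eq_sigma c x₂
  set M := Tr n (c ^ 2 * (x₁ * x₂))
  set T₁ := Tr n (c * x₁)
  set T₂ := Tr n (c * x₂)
  have hs : algebraMap (ZMod 2) (GaloisField 2 n) (s₁ + s₂ + (T₁ * T₂ + M)) =
      sigma n c (x₁ + x₂) := by
    rw [sigma_add, ← hs₁, ← hs₂, map_add, map_add, add_assoc]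
  rw [chi_eq_of_algebraMap_eq_sigma _ _ _ _ hs, chi_eq_of_algebraMap_eq_sigma _ _ _ _ hs₁,
    chi_eq_of_algebraMap_eq_sigma _ _ _ _ hs₂, mul_add c, Tr_add]
  refine neg_one_pow_mul_I_pow_val_add ?_
  simp only [mul_add, Tr_add]
  linear_combination (T₁ * T₂ + M) * CharTwo.two_eq_zero (R := ZMod 2)
end
end

section
/- Let F be the finite field with 2^n elements. If u₁, c₁, u₂, c₂ ∈ F and the functions χ_{u₁,c₁} and χ_{u₂,c₂} given by χ_{u,c}(x,y) = (−1)^{Tr(ux) + Tr(c²y) + σ(c,x)} · i^{Tr(cx)} agree at every (x,y) ∈ F × F, then u₁ = u₂ and c₁ = c₂. -/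
open Finset

noncomputable section

/-! Specialising to `x = 0` leaves `(-1)^{Tr(c²y)}`, so nondegeneracy of the trace form gives
`c₁² = c₂²`, hence `c₁ = c₂` by injectivity of Frobenius. With `c` fixed, specialising to `y = 0`
leaves `(-1)^{Tr(ux)}` times a common nonzero factor, and nondegeneracy again gives `u₁ = u₂`. -/

lemma ZMod.neg_one_pow_val_injective {R : Type*} [Monoid R] [HasDistribNeg R] (h : (-1 : R) ≠ 1) :
    Function.Injective fun a : ZMod 2 => (-1 : R) ^ a.val := by
  intro a b hab
  fin_cases a <;> fin_cases b <;> simp_all [ZMod.val, eq_comm] <;> rfl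

lemma eq_of_forall_Tr_mul_eq {n : ℕ} {a b : GaloisField 2 n}
    (h : ∀ x, Tr n (a * x) = Tr n (b * x)) : a = b := by
  refine sub_eq_zero.mp <| (traceForm_nondegenerate (ZMod 2) (GaloisField 2 n)).1 _ fun x => ?_
  rw [Algebra.traceForm_apply, sub_mul, map_sub]
  exact sub_eq_zero.mpr (h x)

lemma chi_ne_zero (n : ℕ) (u c x y : GaloisField 2 n) : chi n u c x y ≠ 0 :=
  mul_ne_zero (pow_ne_zero _ (by norm_num)) (pow_ne_zero _ Complex.I_ne_zero)

lemma chi_zero_left (n : ℕ) (u c y : GaloisField 2 n) :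
    chi n u c 0 y = (-1 : ℂ) ^ (Tr n (c ^ 2 * y)).val := by
  have hσ : sigma n c 0 = 0 := by simp [sigma]
  simp [chi, Tr, hσ, lift01]

lemma chi_eq_neg_one_pow_mul_chi_zero (n : ℕ) (u c x y : GaloisField 2 n) :
    chi n u c x y = (-1 : ℂ) ^ (Tr n (u * x)).val * chi n 0 c x y := by
  simp only [chi, zero_mul, Tr, map_zero, ZMod.val_zero, zero_add, pow_add]
  ring

/-- Distinct parameters give distinct characters: if `χ_{u₁,c₁}` and `χ_{u₂,c₂}`
agree everywhere then `u₁ = u₂` and `c₁ = c₂`. -/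
theorem chi_injective (n : ℕ) (u₁ c₁ u₂ c₂ : GaloisField 2 n)
    (h : ∀ x y : GaloisField 2 n, chi n u₁ c₁ x y = chi n u₂ c₂ x y) :
    u₁ = u₂ ∧ c₁ = c₂ := by
  have hinj := ZMod.neg_one_pow_val_injective (R := ℂ) (by norm_num)
  obtain rfl : c₁ = c₂ := by
    have hsq : c₁ ^ 2 = c₂ ^ 2 := eq_of_forall_Tr_mul_eq fun y => hinj <| by
      simpa only [chi_zero_left] using h 0 y
    exact frobenius_inj (GaloisField 2 n) 2 hsq
  refine ⟨eq_of_forall_Tr_mul_eq fun x => hinj ?_, rfl⟩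
  have hx := h x 0
  rw [chi_eq_neg_one_pow_mul_chi_zero, chi_eq_neg_one_pow_mul_chi_zero n u₂] at hx
  exact mul_right_cancel₀ (chi_ne_zero n 0 c₁ x 0) hx
end
end
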